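/- arXiv:1402.1561 — 2 statements merged into one kernel-verified Lean document; each statement's English description precedes it below -/
import Mathlib

section
/- For any irreducible e ∈ ℤ², the set Anc(e) of ancestors of e satisfies #Anc(e) ≤ ‖e‖_∞ + 2, where ‖(α,β)‖_∞ = max{|α|,|β|}. -/
/-- Vectors of `ℤ²`. -/
abbrev V : Type := ℤ × ℤ

/-- Determinant of two vectors of `ℤ²`. -/
def det2 (f g : V) : ℤ := f.1 * g.2 - f.2 * g.1

/-- Standard inner product on `ℤ²`. -/
def dot (f g : V) : ℤ := f.1 * g.1 + f.2 * g.2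

/-- Squared euclidean norm on `ℤ²`. -/
def nsq (e : V) : ℤ := e.1 ^ 2 + e.2 ^ 2

/-- A vector of `ℤ²` is irreducible iff its coordinates are coprime. -/
def Irred (e : V) : Prop := Int.gcd e.1 e.2 = 1

/-- `(f, g)` are the parents of `e` : they form a direct acute basis summing to `e`. -/
def IsParents (f g e : V) : Prop := e = f + g ∧ det2 f g = 1 ∧ 0 ≤ dot f g

/-- `f` is a parent of `e`. -/
def IsParent (f e : V) : Prop := ∃ g : V, IsParents f g e ∨ IsParents g f e

/-- Embedding of `ℤ²` into `ℝ²`. -/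
def toR (e : V) : ℝ × ℝ := ((e.1 : ℝ), (e.2 : ℝ))


/-- The ancestor relation : `Anc e a` holds iff `a` belongs to the smallest set containing
`e` and the parents of any of its elements of norm larger than one. -/
inductive Anc : V → V → Prop
  | refl (e : V) : Anc e e
  | left (e a f g : V) : Anc e a → 1 < nsq a → IsParents f g a → Anc e f
  | right (e a f g : V) : Anc e a → 1 < nsq a → IsParents f g a → Anc e g

/-!
If `(f, g)` are parents of `e`, then `⟨f, e⟩ + ⟨g, e⟩ = ‖e‖²` and `⟨f, e⟩⟨g, e⟩ = ⟨f, g⟩‖e‖² + 1`,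
so `⟨f, e⟩` lies strictly between `0` and `‖e‖²`. Any other `f'` with `det (f', e) = 1` is
`f + t e`, which moves `⟨f', e⟩` by `t‖e‖²`; hence the parents are unique.

The shorter parent is a parent of the longer one `p`, so `Anc e ⊆ {e} ∪ Anc p`, unless both parents
are unit vectors and `Anc e` has three elements. Finally `det (f, g) = 1` and `⟨f, g⟩ ≥ 0` put `f`
and `g` in a common closed quadrant, which makes `‖p‖_∞ < ‖e‖_∞`; the bound follows by induction
on `‖e‖_∞`.
-/

def supNorm (e : V) : ℕ := max e.1.natAbs e.2.natAbs

def ancestors (e : V) : Set V := {a | Anc e a}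

lemma Int.natAbs_add_of_mul_nonneg {a b : ℤ} (h : 0 ≤ a * b) :
    (a + b).natAbs = a.natAbs + b.natAbs := by
  rcases mul_nonneg_iff.mp h with ⟨ha, hb⟩ | ⟨ha, hb⟩
  · exact Int.natAbs_add_of_nonneg ha hb
  · exact Int.natAbs_add_of_nonpos ha hb

lemma dot_sq_add_det2_sq (f g : V) : dot f g ^ 2 + det2 f g ^ 2 = nsq f * nsq g := by
  simp only [dot, det2, nsq]; ring

lemma nsq_nonneg (v : V) : 0 ≤ nsq v := by unfold nsq; positivity

lemma nsq_swap (v : V) : nsq v.swap = nsq v := by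
  simp only [nsq, Prod.fst_swap, Prod.snd_swap]; ring

lemma supNorm_swap (v : V) : supNorm v.swap = supNorm v := max_comm _ _

lemma supNorm_rot (v : V) : supNorm (-v.2, v.1) = supNorm v := by
  simp only [supNorm, Int.natAbs_neg, max_comm]

lemma supNorm_pos {e : V} (he : e ≠ 0) : 0 < supNorm e := by
  rw [Ne, Prod.ext_iff, Prod.fst_zero, Prod.snd_zero, ← Int.natAbs_eq_zero,
    ← Int.natAbs_eq_zero] at he
  simp only [supNorm]
  omega

namespace IsParents

variable {e f g f' g' : V}

lemma swap (h : IsParents f g e) : IsParents g.swap f.swap e.swap := by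
  obtain ⟨rfl, hdet, hdot⟩ := h
  refine ⟨by simp only [Prod.swap_add, add_comm], ?_, ?_⟩
  · simp only [det2, Prod.fst_swap, Prod.snd_swap] at hdet ⊢; linarith
  · simp only [dot, Prod.fst_swap, Prod.snd_swap] at hdot ⊢; linarith

lemma rot (h : IsParents f g e) : IsParents (-f.2, f.1) (-g.2, g.1) (-e.2, e.1) := by
  obtain ⟨rfl, hdet, hdot⟩ := h
  refine ⟨by simp only [Prod.fst_add, Prod.snd_add, Prod.mk_add_mk, neg_add], ?_, ?_⟩
  · simp only [det2] at hdet ⊢; linarith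
  · simp only [dot] at hdot ⊢; linarith

lemma one_le_nsq_left (h : IsParents f g e) : 1 ≤ nsq f := by
  have := dot_sq_add_det2_sq f g
  rw [h.2.1] at this
  nlinarith [sq_nonneg (dot f g), nsq_nonneg f, nsq_nonneg g]

lemma one_le_nsq_right (h : IsParents f g e) : 1 ≤ nsq g := by
  simpa only [nsq_swap] using h.swap.one_le_nsq_left

lemma nsq_eq (h : IsParents f g e) : nsq e = nsq f + 2 * dot f g + nsq g := by
  rw [h.1]; simp only [nsq, dot, Prod.fst_add, Prod.snd_add]; ring

lemma one_lt_nsq (h : IsParents f g e) : 1 < nsq e := by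
  linarith [h.nsq_eq, h.one_le_nsq_left, h.one_le_nsq_right, h.2.2]

lemma dot_mul_dot_eq (h : IsParents f g e) : dot f e * dot g e = dot f g * nsq e + 1 := by
  obtain ⟨rfl, hdet, -⟩ := h
  simp only [det2] at hdet
  simp only [dot, nsq, Prod.fst_add, Prod.snd_add]
  linear_combination (f.1 * g.2 - f.2 * g.1 + 1) * hdet

lemma dot_left_mem_Ioo (h : IsParents f g e) : dot f e ∈ Set.Ioo 0 (nsq e) := by
  have hsum : dot f e + dot g e = nsq e := by
    rw [h.1]; simp only [dot, nsq, Prod.fst_add, Prod.snd_add]; ring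
  have hprod := h.dot_mul_dot_eq
  have hN := h.one_lt_nsq
  have hD : 0 ≤ dot f g * nsq e := mul_nonneg h.2.2 (by linarith)
  constructor <;> nlinarith

lemma det2_left (h : IsParents f g e) : det2 f e = 1 := by
  rw [← h.2.1, h.1]; simp only [det2, Prod.fst_add, Prod.snd_add]; ring

lemma eq_add_smul (h : IsParents f g e) (h' : IsParents f' g' e) :
    f' = f + det2 f f' • e := by
  have hf := h.det2_left
  have hf' := h'.det2_left
  simp only [det2] at hf hf'
  ext <;> simp only [Prod.fst_add, Prod.snd_add, smul_eq_mul, Prod.smul_fst, Prod.smul_snd, det2]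
  · linear_combination (-f'.1) * hf + f.1 * hf'
  · linear_combination (-f'.2) * hf + f.2 * hf'

theorem unique (h : IsParents f g e) (h' : IsParents f' g' e) : f' = f ∧ g' = g := by
  have hf' := h.eq_add_smul h'
  set t := det2 f f'
  have hdot : dot f' e = dot f e + t * nsq e := by
    rw [hf']; simp only [dot, nsq, Prod.fst_add, Prod.snd_add, Prod.smul_fst, Prod.smul_snd,
      smul_eq_mul]; ring
  have ht : t = 0 := by
    obtain ⟨h1, h2⟩ := h.dot_left_mem_Ioo
    obtain ⟨h1', h2'⟩ := h'.dot_left_mem_Ioo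
    rcases lt_trichotomy t 0 with ht | ht | ht
    · nlinarith
    · exact ht
    · nlinarith
  have hff : f' = f := by simpa [ht] using hf'
  exact ⟨hff, add_left_cancel (h'.1.symm.trans (hff ▸ h.1))⟩

lemma mul_nonneg_fst_and_snd (h : IsParents f g e) : 0 ≤ f.1 * g.1 ∧ 0 ≤ f.2 * g.2 := by
  have hdet := h.2.1
  have hdot := h.2.2
  simp only [det2] at hdet
  simp only [dot] at hdot
  constructor <;> by_contra! hneg
  · have hpos : 0 < f.2 * g.2 := by linarith
    nlinarith [mul_neg_of_neg_of_pos hneg hpos, sq_nonneg (f.1 * g.2 + f.2 * g.1)]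
  · have hpos : 0 < f.1 * g.1 := by linarith
    nlinarith [mul_neg_of_pos_of_neg hpos hneg, sq_nonneg (f.1 * g.2 + f.2 * g.1)]

lemma natAbs_fst (h : IsParents f g e) : e.1.natAbs = f.1.natAbs + g.1.natAbs := by
  rw [h.1]; exact Int.natAbs_add_of_mul_nonneg h.mul_nonneg_fst_and_snd.1

lemma natAbs_snd (h : IsParents f g e) : e.2.natAbs = f.2.natAbs + g.2.natAbs := by
  rw [h.1]; exact Int.natAbs_add_of_mul_nonneg h.mul_nonneg_fst_and_snd.2

lemma supNorm_left_lt (h : IsParents f g e) (hlt : nsq g < nsq f) : supNorm f < supNorm e := by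
  wlog hle : f.2.natAbs ≤ f.1.natAbs generalizing e f g
  · have hrot := this h.rot (by simpa only [nsq, neg_sq, add_comm] using hlt)
      (by simp only [Int.natAbs_neg]; omega)
    simpa only [supNorm_rot] using hrot
  by_contra! hge
  have hfst := h.natAbs_fst
  have hsnd := h.natAbs_snd
  simp only [supNorm] at hge
  have hg1 : g.1 = 0 := by rw [← Int.natAbs_eq_zero]; omega
  have hdet : f.1 * g.2 = 1 := by simpa [det2, hg1] using h.2.1
  have hunit : f.1.natAbs * g.2.natAbs = 1 := by rw [← Int.natAbs_mul, hdet]; rfl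
  obtain ⟨hf1, hg2⟩ := mul_eq_one.mp hunit
  have hf2 : f.2 = 0 := by rw [← Int.natAbs_eq_zero]; omega
  have hnsq : nsq f = 1 := by
    simp only [nsq, hf2, ← Int.natAbs_sq f.1, hf1]; norm_num
  linarith [h.one_le_nsq_right]

lemma supNorm_right_lt (h : IsParents f g e) (hlt : nsq f < nsq g) : supNorm g < supNorm e := by
  simpa only [supNorm_swap] using h.swap.supNorm_left_lt (by simpa only [nsq_swap] using hlt)

lemma nsq_right_le_dot (h : IsParents f g e) (hlt : nsq g < nsq f) : nsq g ≤ dot f g := by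
  have hL := dot_sq_add_det2_sq f g
  rw [h.2.1] at hL
  nlinarith [h.one_le_nsq_right, h.2.2]

lemma isParents_sub_right (h : IsParents f g e) (hlt : nsq g < nsq f) : IsParents (f - g) g f := by
  have hle := h.nsq_right_le_dot hlt
  have hdet := h.2.1
  refine ⟨(sub_add_cancel f g).symm, ?_, ?_⟩
  · simp only [det2, Prod.fst_sub, Prod.snd_sub] at hdet ⊢; linear_combination hdet
  · simp only [dot, nsq, Prod.fst_sub, Prod.snd_sub] at hle ⊢; linarith

lemma isParents_sub_left (h : IsParents f g e) (hlt : nsq f < nsq g) : IsParents f (g - f) g := by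
  simpa only [Prod.swap_swap, Prod.swap_sub] using
    (h.swap.isParents_sub_right (by simpa only [nsq_swap] using hlt)).swap

lemma nsq_eq_one_of_nsq_eq (h : IsParents f g e) (heq : nsq f = nsq g) : nsq f = 1 := by
  have hL := dot_sq_add_det2_sq f g
  rw [h.2.1, ← heq] at hL
  have hlt : dot f g < nsq f := by nlinarith [h.one_le_nsq_left, h.2.2]
  nlinarith [h.one_le_nsq_left, h.2.2]

lemma exists_anc_or_nsq_eq_one (h : IsParents f g e) :
    (∃ p, Anc p f ∧ Anc p g ∧ supNorm p < supNorm e) ∨ (nsq f = 1 ∧ nsq g = 1) := by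
  rcases lt_trichotomy (nsq f) (nsq g) with hlt | heq | hlt
  · refine .inl ⟨g, ?_, .refl g, h.supNorm_right_lt hlt⟩
    exact .left g g f (g - f) (.refl g) (by linarith [h.one_le_nsq_left]) (h.isParents_sub_left hlt)
  · exact .inr ⟨h.nsq_eq_one_of_nsq_eq heq, heq ▸ h.nsq_eq_one_of_nsq_eq heq⟩
  · refine .inl ⟨f, .refl f, ?_, h.supNorm_left_lt hlt⟩
    exact .right f f (f - g) g (.refl f) (by linarith [h.one_le_nsq_right])
      (h.isParents_sub_right hlt)

end IsParents

lemma Anc.trans {b f a : V} (hf : Anc b f) (ha : Anc f a) : Anc b a := by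
  induction ha with
  | refl => exact hf
  | left a f g _ hn hp ih => exact .left b a f g ih hn hp
  | right a f g _ hn hp ih => exact .right b a f g ih hn hp

lemma ancestors_subset_of_anc {a b : V} (h : Anc b a) : ancestors a ⊆ ancestors b :=
  fun _ hc => h.trans hc

lemma ancestors_eq_singleton {e : V} (h : ∀ f g, ¬ IsParents f g e) : ancestors e = {e} := by
  refine Set.Subset.antisymm (fun a ha => ?_) (Set.singleton_subset_iff.mpr (.refl e))
  induction ha with
  | refl => rfl
  | left a f g _ _ hp ih | right a f g _ _ hp ih => exact absurd (ih ▸ hp) (h f g)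

lemma IsParents.ancestors_subset {e f g : V} (h : IsParents f g e) :
    ancestors e ⊆ insert e (ancestors f ∪ ancestors g) := by
  intro a ha
  induction ha with
  | refl => exact .inl rfl
  | left a f' g' _ hn hp ih =>
    rcases ih with rfl | hf | hg
    · exact .inr (.inl ((h.unique hp).1 ▸ .refl f))
    · exact .inr (.inl (.left f a f' g' hf hn hp))
    · exact .inr (.inr (.left g a f' g' hg hn hp))
  | right a f' g' _ hn hp ih =>
    rcases ih with rfl | hf | hg
    · exact .inr (.inr ((h.unique hp).2 ▸ .refl g))
    · exact .inr (.inl (.right f a f' g' hf hn hp))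
    · exact .inr (.inr (.right g a f' g' hg hn hp))

theorem encard_ancestors_le (e : V) : (ancestors e).encard ≤ (supNorm e + 2 : ℕ) := by
  induction hn : supNorm e using Nat.strong_induction_on generalizing e with
  | _ n ih =>
  subst hn
  by_cases hpar : ∀ f g, ¬ IsParents f g e
  · rw [ancestors_eq_singleton hpar, Set.encard_singleton]
    norm_cast; omega
  simp only [not_forall, not_not] at hpar
  obtain ⟨f, g, h⟩ := hpar
  rcases h.exists_anc_or_nsq_eq_one with ⟨p, hpf, hpg, hlt⟩ | ⟨hf, hg⟩
  · have hsub : ancestors e ⊆ insert e (ancestors p) :=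
      h.ancestors_subset.trans (Set.insert_subset_insert
        (Set.union_subset (ancestors_subset_of_anc hpf) (ancestors_subset_of_anc hpg)))
    calc (ancestors e).encard ≤ (ancestors p).encard + 1 :=
          (Set.encard_le_encard hsub).trans (Set.encard_insert_le _ _)
      _ ≤ (supNorm p + 2 : ℕ) + 1 := by gcongr; exact ih _ hlt p rfl
      _ ≤ (supNorm e + 2 : ℕ) := by norm_cast; omega
  · have hunit {u : V} (hu : nsq u = 1) : ancestors u = {u} :=
      ancestors_eq_singleton fun _ _ hp => hp.one_lt_nsq.ne' hu
    have hsub := h.ancestors_subset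
    rw [hunit hf, hunit hg] at hsub
    have hne : e ≠ 0 := by rintro rfl; simpa [nsq] using h.one_lt_nsq
    calc (ancestors e).encard ≤ ({e, f, g} : Set V).encard := Set.encard_le_encard hsub
      _ ≤ 3 := by grw [Set.encard_insert_le, Set.encard_insert_le, Set.encard_singleton]; norm_num
      _ ≤ (supNorm e + 2 : ℕ) := by have := supNorm_pos hne; norm_cast; omega

theorem card_ancestors_general (e : V) :
    {a : V | Anc e a}.ncard ≤ max e.1.natAbs e.2.natAbs + 2 :=
  (Set.encard_le_coe_iff_finite_ncard_le.mp (encard_ancestors_le e)).2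

/-- For any irreducible `e ∈ ℤ²`, `#Anc(e) ≤ ‖e‖_∞ + 2`. -/
theorem card_ancestors (e : V) (he : Irred e) :
    {a : V | Anc e a}.ncard ≤ max e.1.natAbs e.2.natAbs + 2 :=
  card_ancestors_general e
end

section
/- Let X = Ω ∩ ℤ² for a convex set Ω ⊂ ℝ², and suppose u : X → ℝ satisfies u(x+e) − 2u(x) + u(x−e) ≥ 0 for every x ∈ X and irreducible e ∈ ℤ² with x ± e ∈ X. Then the restriction of u to X' = X ∩ 2ℤ² is the restriction of a convex function, i.e. for every x ∈ X' and irreducible e with ‖e‖ > 1 of parents f, g such that x+2e, x−2f, x−2g ∈ X', one has u(x+2e) + u(x−2f) + u(x−2g) − 3u(x) ≥ 0, and for every irreducible e with x ± 2e ∈ X', u(x+2e) − 2u(x) + u(x−2e) ≥ 0. -/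
/-!
Both inequalities are sums of second differences of `u` on the fine grid `X`: writing
`Δ_e u(x) = u(x + e) - 2 u(x) + u(x - e)`, one has
`Δ_{2e} u(x) = Δ_e u(x + e) + 2 Δ_e u(x) + Δ_e u(x - e)`, and, for `e = f + g`,
`u(x + 2e) + u(x - 2f) + u(x - 2g) - 3 u(x) = Δ_e u(x + e) + 2 Δ_e u(x) + Δ_{f - g} u(x - e)`.
The directions `e` and `f - g` are irreducible since `det (f - g, g) = det (f, g) = 1`, and the
intermediate points `x ± e` lie in `X` because `X = Ω ∩ ℤ²` is closed under integral midpoints.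
-/

section SecondDifference

variable {G : Type*} [AddCommGroup G] (u : G → ℝ)

def secondDiff (x e : G) : ℝ := u (x + e) - 2 * u x + u (x - e)

theorem secondDiff_two_smul (x e : G) :
    secondDiff u x ((2 : ℤ) • e) =
      secondDiff u (x + e) e + 2 * secondDiff u x e + secondDiff u (x - e) e := by
  simp only [secondDiff, two_smul, add_sub_cancel_right, sub_add_cancel, ← add_assoc,
    ← sub_sub]
  ring

theorem triangle_eq_secondDiff (x f g : G) :
    u (x + (2 : ℤ) • (f + g)) + u (x - (2 : ℤ) • f) + u (x - (2 : ℤ) • g) - 3 * u x =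
      secondDiff u (x + (f + g)) (f + g) + 2 * secondDiff u x (f + g) +
        secondDiff u (x - (f + g)) (f - g) := by
  have h₁ : x + (f + g) + (f + g) = x + (2 : ℤ) • (f + g) := by module
  have h₂ : x - (f + g) + (f - g) = x - (2 : ℤ) • g := by module
  have h₃ : x - (f + g) - (f - g) = x - (2 : ℤ) • f := by module
  simp only [secondDiff, h₁, h₂, h₃, add_sub_cancel_right]
  ring

end SecondDifference

theorem Irred.of_det2_eq_one {v w : V} (h : det2 v w = 1) : Irred v := by
  have hdvd : (Int.gcd v.1 v.2 : ℤ) ∣ 1 :=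
    h ▸ dvd_sub ((Int.gcd_dvd_left _ _).mul_right _) ((Int.gcd_dvd_right _ _).mul_right _)
  exact_mod_cast Int.eq_one_of_dvd_one (Int.natCast_nonneg _) hdvd

theorem IsParents.irred_sub {f g e : V} (h : IsParents f g e) : Irred (f - g) :=
  Irred.of_det2_eq_one (w := g) <| by
    have := h.2.1
    simp only [det2, Prod.fst_sub, Prod.snd_sub] at this ⊢
    linarith

theorem toR_add (a b : V) : toR (a + b) = toR a + toR b := by
  simp [toR]

theorem toR_zsmul (n : ℤ) (a : V) : toR (n • a) = (n : ℝ) • toR a := by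
  simp [toR]

theorem Convex.toR_mem_of_add_eq_two_smul {Ω : Set (ℝ × ℝ)} (hΩ : Convex ℝ Ω) {a b m : V}
    (ha : toR a ∈ Ω) (hb : toR b ∈ Ω) (h : a + b = (2 : ℤ) • m) : toR m ∈ Ω := by
  have hsum : toR a + toR b = (2 : ℝ) • toR m := by
    rw [← toR_add, h, toR_zsmul, Int.cast_ofNat]
  have hm : (1 / 2 : ℝ) • toR a + (1 / 2 : ℝ) • toR b = toR m := by
    rw [← smul_add, hsum, smul_smul]
    norm_num
  exact hm ▸ hΩ ha hb (by norm_num) (by norm_num) (by norm_num)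

section MidpointClosed

variable {X : Set V} {u : V → ℝ}
  (hmid : ∀ a ∈ X, ∀ b ∈ X, ∀ m : V, a + b = (2 : ℤ) • m → m ∈ X)
  (hdc : ∀ x ∈ X, ∀ e : V, Irred e → x + e ∈ X → x - e ∈ X → 0 ≤ secondDiff u x e)
include hmid hdc

theorem secondDiff_two_smul_nonneg {x e : V} (hx : x ∈ X) (he : Irred e)
    (hadd : x + (2 : ℤ) • e ∈ X) (hsub : x - (2 : ℤ) • e ∈ X) :
    0 ≤ secondDiff u x ((2 : ℤ) • e) := by
  have hxe : x + e ∈ X := hmid _ hx _ hadd _ (by module)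
  have hxe' : x - e ∈ X := hmid _ hsub _ hx _ (by module)
  have h₁ := hdc _ hxe e he (by convert hadd using 1; module) (by simpa using hx)
  have h₂ := hdc _ hx e he hxe hxe'
  have h₃ := hdc _ hxe' e he (by simpa using hx) (by convert hsub using 1; module)
  rw [secondDiff_two_smul]
  linarith

theorem triangle_nonneg {x e f g : V} (hx : x ∈ X) (he : Irred e) (hfg : IsParents f g e)
    (hadd : x + (2 : ℤ) • e ∈ X) (hf : x - (2 : ℤ) • f ∈ X) (hg : x - (2 : ℤ) • g ∈ X) :
    0 ≤ u (x + (2 : ℤ) • e) + u (x - (2 : ℤ) • f) + u (x - (2 : ℤ) • g) - 3 * u x := by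
  have hsub_irred := hfg.irred_sub
  obtain ⟨rfl, -, -⟩ := hfg
  have hxe : x + (f + g) ∈ X := hmid _ hx _ hadd _ (by module)
  have hxe' : x - (f + g) ∈ X := hmid _ hf _ hg _ (by module)
  have h₁ := hdc _ hxe _ he (by convert hadd using 1; module) (by simpa using hx)
  have h₂ := hdc _ hx _ he hxe hxe'
  have h₃ := hdc _ hxe' _ hsub_irred (by convert hg using 1; module)
    (by convert hf using 1; module)
  rw [triangle_eq_secondDiff]
  linarith

end MidpointClosed

/-- If `u` is directionally convex on `X = Ω ∩ ℤ²`, then its restriction to the coarsened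
grid `X ∩ 2ℤ²` satisfies all triangle and segment inequalities, hence is convex. -/
theorem coarse_grid_convex (Ω : Set (ℝ × ℝ)) (hΩ : Convex ℝ Ω)
    (X : Set V) (hX : X = {v | toR v ∈ Ω})
    (u : V → ℝ)
    (hdc : ∀ x ∈ X, ∀ e : V, Irred e → x + e ∈ X → x - e ∈ X →
      0 ≤ u (x + e) - 2 * u x + u (x - e)) :
    (∀ x ∈ X, 2 ∣ x.1 → 2 ∣ x.2 →
      ∀ e f g : V, Irred e → 1 < nsq e → IsParents f g e →
        x + (2 : ℤ) • e ∈ X → x - (2 : ℤ) • f ∈ X → x - (2 : ℤ) • g ∈ X →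
        0 ≤ u (x + (2 : ℤ) • e) + u (x - (2 : ℤ) • f) + u (x - (2 : ℤ) • g) - 3 * u x) ∧
    (∀ x ∈ X, 2 ∣ x.1 → 2 ∣ x.2 →
      ∀ e : V, Irred e → x + (2 : ℤ) • e ∈ X → x - (2 : ℤ) • e ∈ X →
        0 ≤ u (x + (2 : ℤ) • e) - 2 * u x + u (x - (2 : ℤ) • e)) := by
  have hmid : ∀ a ∈ X, ∀ b ∈ X, ∀ m : V, a + b = (2 : ℤ) • m → m ∈ X := by
    subst hX
    exact fun _ ha _ hb _ => hΩ.toR_mem_of_add_eq_two_smul ha hb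
  exact ⟨fun x hx _ _ e f g he _ hfg hadd hf hg => triangle_nonneg hmid hdc hx he hfg hadd hf hg,
    fun x hx _ _ e he hadd hsub => secondDiff_two_smul_nonneg hmid hdc hx he hadd hsub⟩
end
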